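/- arXiv:0908.0914 — 7 statements merged into one kernel-verified Lean document; each statement's English description precedes it below -/
import Mathlib

section
/- Let c, g ∈ ℝ and let (φ, y) : I → ℝ² be differentiable on an open interval I ⊆ ℝ satisfying the regularized travelling-wave system dφ/dζ = 2φ(ζ)y(ζ), dy/dζ = φ(ζ)² − cφ(ζ) − g − 2y(ζ)² for all ζ ∈ I. Then the function ζ ↦ H(φ(ζ), y(ζ)) is constant on I, where H(φ,y) = φ²(y² − φ²/4 + (c/3)φ + g/2). -/
/-! The function `H` is a first integral of the vector field `(2φy, φ² − cφ − g − 2y²)`: the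
polynomial identity `∂H/∂φ · 2φy + ∂H/∂y · (φ² − cφ − g − 2y²) = 0` makes the derivative of
`H(φ, y)` vanish along every solution, and a function with zero derivative on a convex subset of
`ℝ` is constant there by the mean value theorem. -/

theorem Convex.exists_forall_eq_of_hasDerivAt_zero {E : Type*} [NormedAddCommGroup E]
    [NormedSpace ℝ E] {s : Set ℝ} (hs : Convex ℝ s) {f : ℝ → E}
    (hf : ∀ x ∈ s, HasDerivAt f 0 x) : ∃ a, ∀ x ∈ s, f x = a := by
  rcases s.eq_empty_or_nonempty with rfl | ⟨x₀, hx₀⟩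
  · exact ⟨0, by simp⟩
  refine ⟨f x₀, fun x hx => ?_⟩
  have hle : ‖f x - f x₀‖ ≤ 0 * ‖x - x₀‖ :=
    hs.norm_image_sub_le_of_norm_hasDerivWithin_le (fun z hz => (hf z hz).hasDerivWithinAt)
      (fun _ _ => by simp) hx₀ hx
  rwa [zero_mul, norm_le_zero_iff, sub_eq_zero] at hle

namespace OsmosisK22

noncomputable def energy (c g p q : ℝ) : ℝ := p ^ 2 * (q ^ 2 - p ^ 2 / 4 + c / 3 * p + g / 2)

variable {c g : ℝ} {φ y : ℝ → ℝ} {t : ℝ}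

theorem hasDerivAt_energy_comp {φ' y' : ℝ} (hφ : HasDerivAt φ φ' t) (hy : HasDerivAt y y' t) :
    HasDerivAt (fun s => energy c g (φ s) (y s))
      ((2 * φ t * (y t ^ 2 - φ t ^ 2 / 4 + c / 3 * φ t + g / 2)
          + φ t ^ 2 * (c / 3 - φ t / 2)) * φ' + 2 * φ t ^ 2 * y t * y') t := by
  have hφ2 : HasDerivAt (fun s => φ s ^ 2) (2 * φ t ^ 1 * φ') t := hφ.pow 2
  have hy2 : HasDerivAt (fun s => y s ^ 2) (2 * y t ^ 1 * y') t := hy.pow 2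
  have hinner : HasDerivAt (fun s => y s ^ 2 - φ s ^ 2 / 4 + c / 3 * φ s + g / 2)
      (2 * y t ^ 1 * y' - 2 * φ t ^ 1 * φ' / 4 + c / 3 * φ') t :=
    ((hy2.sub (hφ2.div_const 4)).add (hφ.const_mul (c / 3))).add_const (g / 2)
  exact (hφ2.mul hinner).congr_deriv (by ring)

theorem energy_lie_derivative_eq_zero (p q : ℝ) :
    (2 * p * (q ^ 2 - p ^ 2 / 4 + c / 3 * p + g / 2) + p ^ 2 * (c / 3 - p / 2)) * (2 * p * q)
      + 2 * p ^ 2 * q * (p ^ 2 - c * p - g - 2 * q ^ 2) = 0 := by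
  ring

theorem hasDerivAt_energy_of_isSolution (hφ : HasDerivAt φ (2 * φ t * y t) t)
    (hy : HasDerivAt y (φ t ^ 2 - c * φ t - g - 2 * y t ^ 2) t) :
    HasDerivAt (fun s => energy c g (φ s) (y s)) 0 t :=
  (hasDerivAt_energy_comp hφ hy).congr_deriv (energy_lie_derivative_eq_zero _ _)

end OsmosisK22

theorem osmosis_K22_regularized_first_integral_general
    (c g : ℝ) (I : Set ℝ) (hIconv : Convex ℝ I)
    (φ y : ℝ → ℝ)
    (hφ : ∀ ζ ∈ I, HasDerivAt φ (2 * φ ζ * y ζ) ζ)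
    (hy : ∀ ζ ∈ I, HasDerivAt y ((φ ζ) ^ 2 - c * φ ζ - g - 2 * (y ζ) ^ 2) ζ)
    (H : ℝ → ℝ → ℝ)
    (hH : ∀ p q : ℝ, H p q = p ^ 2 * (q ^ 2 - p ^ 2 / 4 + (c / 3) * p + g / 2)) :
    ∃ h : ℝ, ∀ ζ ∈ I, H (φ ζ) (y ζ) = h := by
  obtain rfl : H = OsmosisK22.energy c g := funext₂ hH
  exact hIconv.exists_forall_eq_of_hasDerivAt_zero fun ζ hζ =>
    OsmosisK22.hasDerivAt_energy_of_isSolution (hφ ζ hζ) (hy ζ hζ)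

/-- Along any solution of the regularized travelling-wave system
`dφ/dζ = 2φy`, `dy/dζ = φ² − cφ − g − 2y²` on an open interval `I`, the function
`H(φ,y) = φ²(y² − φ²/4 + (c/3)φ + g/2)` is constant. -/
theorem osmosis_K22_regularized_first_integral
    (c g : ℝ) (I : Set ℝ) (hI : IsOpen I) (hIconv : Convex ℝ I)
    (φ y : ℝ → ℝ)
    (hφ : ∀ ζ ∈ I, HasDerivAt φ (2 * φ ζ * y ζ) ζ)
    (hy : ∀ ζ ∈ I, HasDerivAt y ((φ ζ) ^ 2 - c * φ ζ - g - 2 * (y ζ) ^ 2) ζ)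
    (H : ℝ → ℝ → ℝ)
    (hH : ∀ p q : ℝ, H p q = p ^ 2 * (q ^ 2 - p ^ 2 / 4 + (c / 3) * p + g / 2)) :
    ∃ h : ℝ, ∀ ζ ∈ I, H (φ ζ) (y ζ) = h :=
  osmosis_K22_regularized_first_integral_general c g I hIconv φ y hφ hy H hH
end

section
/- Let c > 0 and −c²/4 < g < 0, and set φ₀^± = (c ± √(c² + 4g))/2. Then φ₀^- and φ₀^+ are real with 0 < φ₀^- < c/2 < φ₀^+; the Jacobian determinant satisfies J(φ₀^+, 0) = −4(φ₀^+)² + 2cφ₀^+ < 0 (so (φ₀^+,0) is a saddle point), while J(φ₀^-, 0) = −4(φ₀^-)² + 2cφ₀^- > 0 and the trace satisfies p(φ₀^-, 0) = 0 (so (φ₀^-,0) is a center point). -/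
/-- For `c > 0` and `−c²/4 < g < 0`, with `φ₀^± = (c ± √(c²+4g))/2`:
`0 < φ₀^- < c/2 < φ₀^+`; `J(φ₀^+,0) = −4(φ₀^+)² + 2cφ₀^+ < 0` (saddle point), while
`J(φ₀^-,0) = −4(φ₀^-)² + 2cφ₀^- > 0` and the trace `p(φ₀^-,0) = −3·0 = 0` (center point). -/
theorem osmosis_K22_equilibria_g_neg_c_pos
    (c g : ℝ) (hc : 0 < c) (hg1 : -c ^ 2 / 4 < g) (hg2 : g < 0)
    (φm φp : ℝ)
    (hφm : φm = (c - Real.sqrt (c ^ 2 + 4 * g)) / 2)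
    (hφp : φp = (c + Real.sqrt (c ^ 2 + 4 * g)) / 2) :
    (0 < φm ∧ φm < c / 2 ∧ c / 2 < φp) ∧
    (-4 * φp ^ 2 + 2 * c * φp < 0) ∧
    (0 < -4 * φm ^ 2 + 2 * c * φm) ∧
    (-3 * (0:ℝ) = 0) := by
  set s := Real.sqrt (c ^ 2 + 4 * g) with hs
  have hd : 0 < c ^ 2 + 4 * g := by nlinarith
  have hs0 : 0 < s := Real.sqrt_pos.mpr hd
  have hsc : s < c := by
    have : s ^ 2 = c ^ 2 + 4 * g := Real.sq_sqrt hd.le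
    nlinarith
  subst hφm hφp
  refine ⟨⟨by linarith, by linarith, by linarith⟩, by nlinarith, by nlinarith, by ring⟩
end

section
/- Let c < 0 and −c²/4 < g < 0, and set φ₀^± = (c ± √(c² + 4g))/2. Then φ₀^- and φ₀^+ are real with φ₀^- < c/2 < φ₀^+ < 0; the Jacobian determinant satisfies J(φ₀^-, 0) = −4(φ₀^-)² + 2cφ₀^- < 0 (so (φ₀^-,0) is a saddle point), while J(φ₀^+, 0) = −4(φ₀^+)² + 2cφ₀^+ > 0 and the trace satisfies p(φ₀^+, 0) = 0 (so (φ₀^+,0) is a center point). -/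
/-- For `c < 0` and `−c²/4 < g < 0`, with `φ₀^± = (c ± √(c²+4g))/2`:
`φ₀^- < c/2 < φ₀^+ < 0`; `J(φ₀^-,0) = −4(φ₀^-)² + 2cφ₀^- < 0` (saddle point), while
`J(φ₀^+,0) = −4(φ₀^+)² + 2cφ₀^+ > 0` and the trace `p(φ₀^+,0) = −3·0 = 0` (center point). -/
theorem osmosis_K22_equilibria_g_neg_c_neg
    (c g : ℝ) (hc : c < 0) (hg1 : -c ^ 2 / 4 < g) (hg2 : g < 0)
    (φm φp : ℝ)
    (hφm : φm = (c - Real.sqrt (c ^ 2 + 4 * g)) / 2)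
    (hφp : φp = (c + Real.sqrt (c ^ 2 + 4 * g)) / 2) :
    (φm < c / 2 ∧ c / 2 < φp ∧ φp < 0) ∧
    (-4 * φm ^ 2 + 2 * c * φm < 0) ∧
    (0 < -4 * φp ^ 2 + 2 * c * φp) ∧
    (-3 * (0:ℝ) = 0) := by
  set s := Real.sqrt (c ^ 2 + 4 * g) with hs
  have hpos : (0:ℝ) < c ^ 2 + 4 * g := by nlinarith
  have hs2 : s ^ 2 = c ^ 2 + 4 * g := Real.sq_sqrt hpos.le
  have hs0 : 0 < s := Real.sqrt_pos.mpr hpos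
  have hslt : s < -c := by nlinarith
  refine ⟨⟨by nlinarith, by nlinarith, by nlinarith⟩, by nlinarith, by nlinarith, by norm_num⟩
end

section
/- Let c, g ∈ ℝ with c² + 4g > 0, and set φ₀^- = (c − √(c² + 4g))/2, l₁ = −(c + 3√(c² + 4g))/3, l₂ = (c² + 6g − c√(c² + 4g))/6. Then for every real φ ≠ 0 with φ² + l₁φ + l₂ ≥ 0, setting y = (φ − φ₀^-)·√(φ² + l₁φ + l₂)/(2φ), one has H(φ, y) = H(φ₀^-, 0), where H(φ,y) = φ²(y² − φ²/4 + (c/3)φ + g/2). In other words, the curve y = ±(φ − φ₀^-)√(φ² + l₁φ + l₂)/(2φ) lies on the level set of the first integral H through the saddle point (φ₀^-, 0). -/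
/-- With `c² + 4g > 0`, `φ₀^- = (c − √(c²+4g))/2`,
`l₁ = −(c + 3√(c²+4g))/3`, `l₂ = (c² + 6g − c√(c²+4g))/6`, the curve
`y = (φ − φ₀^-)√(φ² + l₁φ + l₂)/(2φ)` lies on the level set of the first integral
`H(φ,y) = φ²(y² − φ²/4 + (c/3)φ + g/2)` through the saddle point `(φ₀^-, 0)`. -/
theorem osmosis_K22_orbit_on_level_set_minus
    (c g : ℝ) (hcg : 0 < c ^ 2 + 4 * g)
    (φ0m l1 l2 : ℝ)
    (hφ0m : φ0m = (c - Real.sqrt (c ^ 2 + 4 * g)) / 2)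
    (hl1 : l1 = -(c + 3 * Real.sqrt (c ^ 2 + 4 * g)) / 3)
    (hl2 : l2 = (c ^ 2 + 6 * g - c * Real.sqrt (c ^ 2 + 4 * g)) / 6)
    (H : ℝ → ℝ → ℝ)
    (hH : ∀ p q : ℝ, H p q = p ^ 2 * (q ^ 2 - p ^ 2 / 4 + (c / 3) * p + g / 2)) :
    ∀ φ : ℝ, φ ≠ 0 → 0 ≤ φ ^ 2 + l1 * φ + l2 →
      H φ ((φ - φ0m) * Real.sqrt (φ ^ 2 + l1 * φ + l2) / (2 * φ)) = H φ0m 0 := by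
  intro φ hφ hge
  set s := Real.sqrt (c ^ 2 + 4 * g) with hsdef
  have hs : s ^ 2 = c ^ 2 + 4 * g := Real.sq_sqrt hcg.le
  have hr : Real.sqrt (φ ^ 2 + l1 * φ + l2) ^ 2 = φ ^ 2 + l1 * φ + l2 :=
    Real.sq_sqrt hge
  have hg : g = (s ^ 2 - c ^ 2) / 4 := by linarith
  rw [hH, hH]
  rw [div_pow, mul_pow, hr]
  subst hφ0m hl1 hl2
  rw [hg]
  field_simp
  ring
end

section
/- Let c, g ∈ ℝ with c² + 4g > 0, and set φ₀^+ = (c + √(c² + 4g))/2, m₁ = −(c − 3√(c² + 4g))/3, m₂ = (c² + 6g + c√(c² + 4g))/6. Then for every real φ ≠ 0 with φ² + m₁φ + m₂ ≥ 0, setting y = (φ − φ₀^+)·√(φ² + m₁φ + m₂)/(2φ), one has H(φ, y) = H(φ₀^+, 0), where H(φ,y) = φ²(y² − φ²/4 + (c/3)φ + g/2). In other words, the curve y = ±(φ − φ₀^+)√(φ² + m₁φ + m₂)/(2φ) lies on the level set of the first integral H through the saddle point (φ₀^+, 0). -/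
/-- With `c² + 4g > 0`, `φ₀^+ = (c + √(c²+4g))/2`,
`m₁ = −(c − 3√(c²+4g))/3`, `m₂ = (c² + 6g + c√(c²+4g))/6`, the curve
`y = (φ − φ₀^+)√(φ² + m₁φ + m₂)/(2φ)` lies on the level set of the first integral
`H(φ,y) = φ²(y² − φ²/4 + (c/3)φ + g/2)` through the saddle point `(φ₀^+, 0)`. -/
theorem osmosis_K22_orbit_on_level_set_plus
    (c g : ℝ) (hcg : 0 < c ^ 2 + 4 * g)
    (φ0p m1 m2 : ℝ)
    (hφ0p : φ0p = (c + Real.sqrt (c ^ 2 + 4 * g)) / 2)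
    (hm1 : m1 = -(c - 3 * Real.sqrt (c ^ 2 + 4 * g)) / 3)
    (hm2 : m2 = (c ^ 2 + 6 * g + c * Real.sqrt (c ^ 2 + 4 * g)) / 6)
    (H : ℝ → ℝ → ℝ)
    (hH : ∀ p q : ℝ, H p q = p ^ 2 * (q ^ 2 - p ^ 2 / 4 + (c / 3) * p + g / 2)) :
    ∀ φ : ℝ, φ ≠ 0 → 0 ≤ φ ^ 2 + m1 * φ + m2 →
      H φ ((φ - φ0p) * Real.sqrt (φ ^ 2 + m1 * φ + m2) / (2 * φ)) = H φ0p 0 := by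
  intro φ hφ hpos
  set s := Real.sqrt (c ^ 2 + 4 * g) with hsdef
  have hs : s ^ 2 = c ^ 2 + 4 * g := Real.sq_sqrt hcg.le
  subst hφ0p hm1 hm2
  rw [hH, hH]
  have hy2 : ((φ - (c + s) / 2) * Real.sqrt (φ ^ 2 + -(c - 3 * s) / 3 * φ +
      (c ^ 2 + 6 * g + c * s) / 6) / (2 * φ)) ^ 2 * φ ^ 2 =
      (φ - (c + s) / 2) ^ 2 * (φ ^ 2 + -(c - 3 * s) / 3 * φ +
      (c ^ 2 + 6 * g + c * s) / 6) / 4 := by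
    rw [div_pow, mul_pow, Real.sq_sqrt hpos]
    field_simp
    ring
  linear_combination hy2 + (-(3:ℝ)/16*φ^2 + 1/16*s*φ + 1/64*s^2 + 1/16*c*φ + 1/32*c*s + 1/64*c^2) * hs
end

section
/- Let c, g ∈ ℝ with c² + 4g > 0, let ε ∈ {−1, 1}, and set φ₀^- = (c − √(c² + 4g))/2, l₁ = −(c + 3√(c² + 4g))/3, l₂ = (c² + 6g − c√(c² + 4g))/6. Let φ be differentiable on an open interval I with φ(ξ) ≠ 0 and φ(ξ)² + l₁φ(ξ) + l₂ > 0 for all ξ ∈ I, satisfying the orbit equation φ′(ξ) = ε·(φ(ξ) − φ₀^-)·√(φ(ξ)² + l₁φ(ξ) + l₂)/(2φ(ξ)) on I. Then φ is twice differentiable on I and satisfies the once-integrated travelling-wave equation −cφ + φ² − 2(φ′)² − 2φφ″ = g on I; hence u(x,t) = φ(x − ct) is a travelling wave solution of the osmosis K(2,2) equation. -/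
/-!
Along an orbit `φ' = F(φ)` of an autonomous equation the second derivative is `φ'' = F'(φ) F(φ)`,
so the travelling-wave equation only has to be checked as an identity in the phase variable
`p = φ`. Differentiating the first integral `p² F(p)² = E(p)` of the planar system gives
`2p F² + 2p² F F' = E'(p)`, and the integrated equation is this identity divided by `p`, provided
`E'(p) = p (p² - c p - g)`. For the orbit through the saddle `(φ₀⁻, 0)` one has
`E(p) = (p - φ₀⁻)² (p² + l₁ p + l₂) / 4`, a quartic with a double root at `φ₀⁻`, and its derivative
has this form precisely for the stated values of `l₁` and `l₂`.
-/

open Filter Topology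

theorem hasDerivAt_deriv_of_eventually_hasDerivAt_comp {F φ : ℝ → ℝ} {F' ξ : ℝ}
    (hφ : ∀ᶠ ζ in 𝓝 ξ, HasDerivAt φ (F (φ ζ)) ζ) (hF : HasDerivAt F F' (φ ξ)) :
    HasDerivAt (deriv φ) (F' * F (φ ξ)) ξ := by
  have hderiv : deriv φ =ᶠ[𝓝 ξ] F ∘ φ := hφ.mono fun _ h => h.deriv
  exact (hF.comp ξ hφ.self_of_nhds).congr_of_eventuallyEq hderiv

theorem integrated_wave_eq_of_hasDerivAt_first_integral {F : ℝ → ℝ} {F' c g p : ℝ}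
    (hp : p ≠ 0) (hF : HasDerivAt F F' p)
    (hE : HasDerivAt (fun q => q ^ 2 * F q ^ 2) (p * (p ^ 2 - c * p - g)) p) :
    -c * p + p ^ 2 - 2 * F p ^ 2 - 2 * p * (F' * F p) = g := by
  have hprod : HasDerivAt (fun q => q ^ 2 * F q ^ 2)
      (2 * p * F p ^ 2 + p ^ 2 * (2 * F p * F')) p :=
    ((hasDerivAt_pow 2 p).fun_mul (hF.fun_pow 2)).congr_deriv (by norm_num)
  have hE' := hE.unique hprod
  have : p * (-c * p + p ^ 2 - 2 * F p ^ 2 - 2 * p * (F' * F p)) = p * g := by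
    linear_combination hE'
  exact mul_left_cancel₀ hp this

theorem hasDerivAt_orbit_energy {c g s a l1 l2 : ℝ} (hs : s ^ 2 = c ^ 2 + 4 * g)
    (ha : a = (c - s) / 2) (hl1 : l1 = -(c + 3 * s) / 3)
    (hl2 : l2 = (c ^ 2 + 6 * g - c * s) / 6) (p : ℝ) :
    HasDerivAt (fun q => (q - a) ^ 2 * (q ^ 2 + l1 * q + l2) / 4)
      (p * (p ^ 2 - c * p - g)) p := by
  have hpoly : HasDerivAt (fun q => (q - a) ^ 2 * (q ^ 2 + l1 * q + l2) / 4)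
      ((2 * (p - a) * (p ^ 2 + l1 * p + l2) + (p - a) ^ 2 * (2 * p + l1)) / 4) p :=
    ((((hasDerivAt_id p).sub_const a).fun_pow 2).fun_mul
      ((((hasDerivAt_id p).fun_pow 2).fun_add
        ((hasDerivAt_id p).const_mul l1)).add_const l2)).div_const 4 |>.congr_deriv
          (by norm_num)
  refine hpoly.congr_deriv ?_
  subst ha hl1 hl2
  linear_combination (c / 16 - s / 16 - 3 / 8 * p) * hs

noncomputable def orbitSlope (ε a l1 l2 p : ℝ) : ℝ :=
  ε * (p - a) * Real.sqrt (p ^ 2 + l1 * p + l2) / (2 * p)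

theorem differentiableAt_orbitSlope {ε a l1 l2 p : ℝ} (hp : p ≠ 0)
    (hQ : 0 < p ^ 2 + l1 * p + l2) : DifferentiableAt ℝ (orbitSlope ε a l1 l2) p := by
  unfold orbitSlope
  fun_prop (disch := first | exact hQ.ne' | exact mul_ne_zero two_ne_zero hp)

theorem sq_mul_orbitSlope_sq {ε a l1 l2 q : ℝ} (hε : ε ^ 2 = 1) (hq : q ≠ 0)
    (hQ : 0 ≤ q ^ 2 + l1 * q + l2) :
    q ^ 2 * orbitSlope ε a l1 l2 q ^ 2 = (q - a) ^ 2 * (q ^ 2 + l1 * q + l2) / 4 := by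
  unfold orbitSlope
  rw [div_pow, mul_pow, mul_pow, mul_pow, hε, Real.sq_sqrt hQ]
  field_simp
  ring

theorem hasDerivAt_sq_mul_orbitSlope_sq {c g s ε a l1 l2 p : ℝ} (hs : s ^ 2 = c ^ 2 + 4 * g)
    (ha : a = (c - s) / 2) (hl1 : l1 = -(c + 3 * s) / 3)
    (hl2 : l2 = (c ^ 2 + 6 * g - c * s) / 6) (hε : ε ^ 2 = 1) (hp : p ≠ 0)
    (hQ : 0 < p ^ 2 + l1 * p + l2) :
    HasDerivAt (fun q => q ^ 2 * orbitSlope ε a l1 l2 q ^ 2) (p * (p ^ 2 - c * p - g)) p := by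
  have hnear : ∀ᶠ q in 𝓝 p, q ≠ 0 ∧ 0 < q ^ 2 + l1 * q + l2 :=
    (eventually_ne_nhds hp).and
      ((by fun_prop : Continuous fun q : ℝ => q ^ 2 + l1 * q + l2).continuousAt.eventually
        (lt_mem_nhds hQ))
  refine (hasDerivAt_orbit_energy hs ha hl1 hl2 p).congr_of_eventuallyEq ?_
  exact hnear.mono fun q ⟨hq, hQq⟩ => sq_mul_orbitSlope_sq hε hq hQq.le

theorem osmosis_K22_orbit_solves_ode_general
    (c g : ℝ) (hcg : 0 < c ^ 2 + 4 * g)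
    (ε : ℝ) (hε : ε = -1 ∨ ε = 1)
    (φ0m l1 l2 : ℝ)
    (hφ0m : φ0m = (c - Real.sqrt (c ^ 2 + 4 * g)) / 2)
    (hl1 : l1 = -(c + 3 * Real.sqrt (c ^ 2 + 4 * g)) / 3)
    (hl2 : l2 = (c ^ 2 + 6 * g - c * Real.sqrt (c ^ 2 + 4 * g)) / 6)
    (I : Set ℝ) (hI : IsOpen I)
    (φ : ℝ → ℝ)
    (hne : ∀ ξ ∈ I, φ ξ ≠ 0)
    (hpos : ∀ ξ ∈ I, 0 < (φ ξ) ^ 2 + l1 * φ ξ + l2)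
    (horb : ∀ ξ ∈ I, HasDerivAt φ
      (ε * (φ ξ - φ0m) * Real.sqrt ((φ ξ) ^ 2 + l1 * φ ξ + l2) / (2 * φ ξ)) ξ) :
    (∀ ξ ∈ I, DifferentiableAt ℝ (deriv φ) ξ) ∧
    (∀ ξ ∈ I, -c * φ ξ + (φ ξ) ^ 2 - 2 * (deriv φ ξ) ^ 2
      - 2 * φ ξ * deriv (deriv φ) ξ = g) := by
  set F := orbitSlope ε φ0m l1 l2
  have hs : Real.sqrt (c ^ 2 + 4 * g) ^ 2 = c ^ 2 + 4 * g := Real.sq_sqrt hcg.le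
  have hε2 : ε ^ 2 = 1 := by rcases hε with rfl | rfl <;> norm_num
  have hF : ∀ ξ ∈ I, HasDerivAt F (deriv F (φ ξ)) (φ ξ) := fun ξ hξ =>
    (differentiableAt_orbitSlope (hne ξ hξ) (hpos ξ hξ)).hasDerivAt
  have hφ'' : ∀ ξ ∈ I, HasDerivAt (deriv φ) (deriv F (φ ξ) * F (φ ξ)) ξ := fun ξ hξ =>
    hasDerivAt_deriv_of_eventually_hasDerivAt_comp
      (eventually_of_mem (hI.mem_nhds hξ) horb) (hF ξ hξ)
  refine ⟨fun ξ hξ => (hφ'' ξ hξ).differentiableAt, fun ξ hξ => ?_⟩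
  rw [(hφ'' ξ hξ).deriv, (horb ξ hξ).deriv]
  exact integrated_wave_eq_of_hasDerivAt_first_integral (hne ξ hξ) (hF ξ hξ)
    (hasDerivAt_sq_mul_orbitSlope_sq hs hφ0m hl1 hl2 hε2 (hne ξ hξ) (hpos ξ hξ))

/-- A solution `φ` of the orbit equation
`φ′ = ε (φ − φ₀^-) √(φ² + l₁φ + l₂)/(2φ)` (with `ε = ±1`) on an open interval `I`
(with `φ ≠ 0` and `φ² + l₁φ + l₂ > 0` on `I`) is twice differentiable and satisfies the
once-integrated travelling-wave equation `−cφ + φ² − 2(φ′)² − 2φφ″ = g` on `I`;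
hence `u(x,t) = φ(x − ct)` is a travelling wave solution of the osmosis K(2,2) equation. -/
theorem osmosis_K22_orbit_solves_ode
    (c g : ℝ) (hcg : 0 < c ^ 2 + 4 * g)
    (ε : ℝ) (hε : ε = -1 ∨ ε = 1)
    (φ0m l1 l2 : ℝ)
    (hφ0m : φ0m = (c - Real.sqrt (c ^ 2 + 4 * g)) / 2)
    (hl1 : l1 = -(c + 3 * Real.sqrt (c ^ 2 + 4 * g)) / 3)
    (hl2 : l2 = (c ^ 2 + 6 * g - c * Real.sqrt (c ^ 2 + 4 * g)) / 6)
    (I : Set ℝ) (hI : IsOpen I) (hIconv : Convex ℝ I)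
    (φ : ℝ → ℝ)
    (hne : ∀ ξ ∈ I, φ ξ ≠ 0)
    (hpos : ∀ ξ ∈ I, 0 < (φ ξ) ^ 2 + l1 * φ ξ + l2)
    (horb : ∀ ξ ∈ I, HasDerivAt φ
      (ε * (φ ξ - φ0m) * Real.sqrt ((φ ξ) ^ 2 + l1 * φ ξ + l2) / (2 * φ ξ)) ξ) :
    (∀ ξ ∈ I, DifferentiableAt ℝ (deriv φ) ξ) ∧
    (∀ ξ ∈ I, -c * φ ξ + (φ ξ) ^ 2 - 2 * (deriv φ ξ) ^ 2
      - 2 * φ ξ * deriv (deriv φ) ξ = g) :=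
  osmosis_K22_orbit_solves_ode_general c g hcg ε hε φ0m l1 l2 hφ0m hl1 hl2 I hI φ hne hpos horb
end

section
/- Let c < 0, g > 0, ε ∈ {−1, 1}, and let a be a constant with φ₀^- < a < c/2. Let I be an open interval containing 0 and let φ : I → ℝ be differentiable with φ(0) = a such that for every ξ ∈ I: φ₀^- < φ(ξ) < c/2, φ(ξ)² + l₁φ(ξ) + l₂ > 0, 2√(φ(ξ)² + l₁φ(ξ) + l₂) + 2φ(ξ) + l₁ > 0, 2√(a₁)·√(φ(ξ)² + l₁φ(ξ) + l₂) + b₁φ(ξ) + l₃ > 0, and φ′(ξ) = ε·(φ(ξ) − φ₀^-)·√(φ(ξ)² + l₁φ(ξ) + l₂)/(2φ(ξ)). Then β₁(φ(ξ)) = β₁(a)·exp(εξ/2) for all ξ ∈ I. (The case ε = −1 is the kink-like wave solution φ₁ of equation (3.3), and ε = 1 is the antikink-like wave solution φ₂ of equation (3.4).) -/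
/-!
Write `Q x = x² + l₁x + l₂` and `m = φ₀^-`. Along the orbit `φ' = ε (φ - m) √(Q φ) / (2φ)`, so
`ε/2` is the derivative of `F ∘ φ` for any antiderivative `F` of `x / ((x - m) √(Q x))`.
Splitting `x / ((x - m) √Q) = 1 / √Q + m / ((x - m) √Q)`, the first piece integrates to
`log (2√Q + 2x + l₁)` and the second, by Euler's substitution, to
`(m / r) (log (x - m) - log (2r√Q + b₁x + l₃))` with `r = √(Q m) = √a₁`; since `α₁ = m / r`,
this `F` is `log β₁`. Hence `log β₁ (φ ξ) - εξ/2` is constant on the interval.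
-/

open Real

namespace OsmosisK22

theorem hasDerivAt_sqrt_quadratic {l1 l2 x : ℝ} (hQ : 0 < x ^ 2 + l1 * x + l2) :
    HasDerivAt (fun y => √(y ^ 2 + l1 * y + l2))
      ((2 * x + l1) / (2 * √(x ^ 2 + l1 * x + l2))) x := by
  have hQ' : HasDerivAt (fun y => y ^ 2 + l1 * y + l2) (2 * x + l1) x := by
    simpa using ((hasDerivAt_pow 2 x).add ((hasDerivAt_id x).const_mul l1)).add_const l2
  exact hQ'.sqrt hQ.ne'

theorem hasDerivAt_mul_sqrt_quadratic_add {l1 l2 b l3 x : ℝ} (k : ℝ)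
    (hQ : 0 < x ^ 2 + l1 * x + l2) :
    HasDerivAt (fun y => k * √(y ^ 2 + l1 * y + l2) + b * y + l3)
      (k * ((2 * x + l1) / (2 * √(x ^ 2 + l1 * x + l2))) + b) x := by
  simpa using (((hasDerivAt_sqrt_quadratic hQ).const_mul k).add
    ((hasDerivAt_id' x).const_mul b)).add_const l3

theorem hasDerivAt_log_two_sqrt_quadratic_add {l1 l2 x : ℝ} (hQ : 0 < x ^ 2 + l1 * x + l2)
    (hN : 2 * √(x ^ 2 + l1 * x + l2) + 2 * x + l1 ≠ 0) :
    HasDerivAt (fun y => log (2 * √(y ^ 2 + l1 * y + l2) + 2 * y + l1))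
      (1 / √(x ^ 2 + l1 * x + l2)) x := by
  have hp : 0 < √(x ^ 2 + l1 * x + l2) := sqrt_pos.mpr hQ
  refine ((hasDerivAt_mul_sqrt_quadratic_add 2 hQ).log hN).congr_deriv ?_
  set p := √(x ^ 2 + l1 * x + l2)
  set N := 2 * p + 2 * x + l1 with hN_def
  field_simp
  rw [hN_def]
  ring

theorem hasDerivAt_log_sub_sub_log_two_mul_sqrt_quadratic {m l1 l2 b1 l3 r x : ℝ}
    (hr : r ^ 2 = m ^ 2 + l1 * m + l2) (hb1 : b1 = l1 + 2 * m) (hl3 : l3 = 2 * l2 + m * l1)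
    (hQ : 0 < x ^ 2 + l1 * x + l2) (hxm : x - m ≠ 0)
    (hD : 2 * r * √(x ^ 2 + l1 * x + l2) + b1 * x + l3 ≠ 0) :
    HasDerivAt (fun y => log (y - m) - log (2 * r * √(y ^ 2 + l1 * y + l2) + b1 * y + l3))
      (r / ((x - m) * √(x ^ 2 + l1 * x + l2))) x := by
  have hp : 0 < √(x ^ 2 + l1 * x + l2) := sqrt_pos.mpr hQ
  have hp2 : √(x ^ 2 + l1 * x + l2) ^ 2 = x ^ 2 + l1 * x + l2 := sq_sqrt hQ.le
  refine ((((hasDerivAt_id' x).sub_const m).log hxm).sub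
    ((hasDerivAt_mul_sqrt_quadratic_add (2 * r) hQ).log hD)).congr_deriv ?_
  set p := √(x ^ 2 + l1 * x + l2)
  set D := 2 * r * p + b1 * x + l3 with hD_def
  field_simp
  -- `√Q · D - (x - m)(r (2x + l₁) + b₁ √Q) = r D` because `r² = Q m`
  rw [hD_def, hb1, hl3]
  linear_combination 2 * r * hp2 - 2 * p * hr

/-- `log β₁ x` wherever the three factors of `β₁` are positive, with `m = φ₀^-` and `r = √a₁`. -/
noncomputable def logBeta (l1 l2 l3 b1 m α r x : ℝ) : ℝ :=
  log (2 * √(x ^ 2 + l1 * x + l2) + 2 * x + l1)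
    + α * (log (x - m) - log (2 * r * √(x ^ 2 + l1 * x + l2) + b1 * x + l3))

section logBeta

variable {l1 l2 l3 b1 m α r x : ℝ}

theorem exp_logBeta (hN : 0 < 2 * √(x ^ 2 + l1 * x + l2) + 2 * x + l1) (hxm : 0 < x - m)
    (hD : 0 < 2 * r * √(x ^ 2 + l1 * x + l2) + b1 * x + l3) :
    exp (logBeta l1 l2 l3 b1 m α r x) = (2 * √(x ^ 2 + l1 * x + l2) + 2 * x + l1) *
      (x - m) ^ α / (2 * r * √(x ^ 2 + l1 * x + l2) + b1 * x + l3) ^ α := by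
  rw [rpow_def_of_pos hxm, rpow_def_of_pos hD, logBeta, mul_sub, exp_add, exp_sub, exp_log hN,
    mul_comm α, mul_comm α, mul_div_assoc]

theorem hasDerivAt_logBeta (hr : r ^ 2 = m ^ 2 + l1 * m + l2) (hb1 : b1 = l1 + 2 * m)
    (hl3 : l3 = 2 * l2 + m * l1) (hα : α * r = m) (hQ : 0 < x ^ 2 + l1 * x + l2) (hxm : x - m ≠ 0)
    (hN : 2 * √(x ^ 2 + l1 * x + l2) + 2 * x + l1 ≠ 0)
    (hD : 2 * r * √(x ^ 2 + l1 * x + l2) + b1 * x + l3 ≠ 0) :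
    HasDerivAt (logBeta l1 l2 l3 b1 m α r) (x / ((x - m) * √(x ^ 2 + l1 * x + l2))) x := by
  have hp : 0 < √(x ^ 2 + l1 * x + l2) := sqrt_pos.mpr hQ
  refine ((hasDerivAt_log_two_sqrt_quadratic_add hQ hN).add
    ((hasDerivAt_log_sub_sub_log_two_mul_sqrt_quadratic hr hb1 hl3 hQ hxm hD).const_mul α))
    |>.congr_deriv ?_
  set p := √(x ^ 2 + l1 * x + l2)
  field_simp
  linear_combination hα

theorem hasDerivAt_logBeta_comp {φ : ℝ → ℝ} {ε ξ : ℝ} (hr : r ^ 2 = m ^ 2 + l1 * m + l2)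
    (hb1 : b1 = l1 + 2 * m) (hl3 : l3 = 2 * l2 + m * l1) (hα : α * r = m)
    (hφ : HasDerivAt φ (ε * (φ ξ - m) * √(φ ξ ^ 2 + l1 * φ ξ + l2) / (2 * φ ξ)) ξ)
    (hφξ : φ ξ ≠ 0) (hQ : 0 < φ ξ ^ 2 + l1 * φ ξ + l2) (hxm : φ ξ - m ≠ 0)
    (hN : 2 * √(φ ξ ^ 2 + l1 * φ ξ + l2) + 2 * φ ξ + l1 ≠ 0)
    (hD : 2 * r * √(φ ξ ^ 2 + l1 * φ ξ + l2) + b1 * φ ξ + l3 ≠ 0) :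
    HasDerivAt (logBeta l1 l2 l3 b1 m α r ∘ φ) (ε / 2) ξ := by
  have hp : 0 < √(φ ξ ^ 2 + l1 * φ ξ + l2) := sqrt_pos.mpr hQ
  refine ((hasDerivAt_logBeta hr hb1 hl3 hα hQ hxm hN hD).comp ξ hφ).congr_deriv ?_
  set p := √(φ ξ ^ 2 + l1 * φ ξ + l2)
  field_simp

end logBeta

end OsmosisK22

theorem osmosis_K22_kink_like_c_neg_g_pos_general
    (c g : ℝ) (hc : c < 0) (hg : 0 < g)
    (ε : ℝ)
    (s φ0m l1 l2 l3 a1 b1 α1 : ℝ)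
    (hs : s = Real.sqrt (c ^ 2 + 4 * g))
    (hφ0m : φ0m = (c - s) / 2)
    (hl1 : l1 = -(c + 3 * s) / 3)
    (hl2 : l2 = (c ^ 2 + 6 * g - c * s) / 6)
    (hl3 : l3 = (2 / 3) * (c ^ 2 + 6 * g - c * s))
    (ha1 : a1 = c ^ 2 + 4 * g - c * s)
    (hb1 : b1 = (2 * c - 6 * s) / 3)
    (hα1 : α1 = (c - s) / (2 * Real.sqrt a1))
    (β₁ : ℝ → ℝ)
    (hβ₁ : ∀ x : ℝ, β₁ x =
      (2 * Real.sqrt (x ^ 2 + l1 * x + l2) + 2 * x + l1) * (x - φ0m) ^ α1 /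
        (2 * Real.sqrt a1 * Real.sqrt (x ^ 2 + l1 * x + l2) + b1 * x + l3) ^ α1)
    (a : ℝ)
    (I : Set ℝ) (hI : IsOpen I) (hIconv : Convex ℝ I) (h0I : (0:ℝ) ∈ I)
    (φ : ℝ → ℝ) (hφ0 : φ 0 = a)
    (hrange : ∀ ξ ∈ I, φ0m < φ ξ ∧ φ ξ < c / 2)
    (hq : ∀ ξ ∈ I, 0 < (φ ξ) ^ 2 + l1 * φ ξ + l2)
    (hnum : ∀ ξ ∈ I, 0 < 2 * Real.sqrt ((φ ξ) ^ 2 + l1 * φ ξ + l2) + 2 * φ ξ + l1)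
    (hden : ∀ ξ ∈ I,
      0 < 2 * Real.sqrt a1 * Real.sqrt ((φ ξ) ^ 2 + l1 * φ ξ + l2) + b1 * φ ξ + l3)
    (horb : ∀ ξ ∈ I, HasDerivAt φ
      (ε * (φ ξ - φ0m) * Real.sqrt ((φ ξ) ^ 2 + l1 * φ ξ + l2) / (2 * φ ξ)) ξ) :
    ∀ ξ ∈ I, β₁ (φ ξ) = β₁ a * Real.exp (ε * ξ / 2) := by
  have hs2 : s ^ 2 = c ^ 2 + 4 * g := hs ▸ sq_sqrt (by positivity)
  have hs0 : 0 < s := hs ▸ sqrt_pos.mpr (by positivity)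
  have ha1_pos : 0 < a1 := by rw [ha1]; nlinarith
  have hr : √a1 ^ 2 = φ0m ^ 2 + l1 * φ0m + l2 := by
    rw [sq_sqrt ha1_pos.le, ha1, hφ0m, hl1, hl2]; linear_combination (-3 / 4 : ℝ) * hs2
  have hb1' : b1 = l1 + 2 * φ0m := by rw [hb1, hl1, hφ0m]; ring
  have hl3' : l3 = 2 * l2 + φ0m * l1 := by
    rw [hl3, hl2, hφ0m, hl1]; linear_combination (-1 / 2 : ℝ) * hs2
  have hα : α1 * √a1 = φ0m := by rw [hα1, hφ0m]; field_simp [(sqrt_pos.mpr ha1_pos).ne']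
  set L := OsmosisK22.logBeta l1 l2 l3 b1 φ0m α1 (√a1)
  have hβ : ∀ ξ ∈ I, β₁ (φ ξ) = exp (L (φ ξ)) := fun ξ hξ => by
    rw [hβ₁, OsmosisK22.exp_logBeta (hnum ξ hξ) (sub_pos.mpr (hrange ξ hξ).1) (hden ξ hξ)]
  have hL : ∀ ξ ∈ I, HasDerivAt (L ∘ φ) (ε / 2) ξ := fun ξ hξ =>
    OsmosisK22.hasDerivAt_logBeta_comp hr hb1' hl3' hα (horb ξ hξ)
      (by linarith [(hrange ξ hξ).2] : φ ξ < 0).ne (hq ξ hξ) (sub_pos.mpr (hrange ξ hξ).1).ne'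
      (hnum ξ hξ).ne' (hden ξ hξ).ne'
  have hlin : Set.EqOn (L ∘ φ) (fun ξ => L a + ε * ξ / 2) I := by
    refine hI.eqOn_of_deriv_eq hIconv.isPreconnected
      (fun ξ hξ => (hL ξ hξ).differentiableAt.differentiableWithinAt) (by fun_prop)
      (fun ξ hξ => ?_) h0I (by simp [hφ0])
    rw [(hL ξ hξ).deriv, ((hasDerivAt_id' ξ).const_mul ε |>.div_const 2 |>.const_add (L a)).deriv]
    ring
  intro ξ hξ
  rw [hβ ξ hξ, ← hφ0, hβ 0 h0I, ← exp_add, hφ0]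
  exact congrArg exp (hlin hξ)

/-- kink-like (ε = −1, eq. (3.3)) and antikink-like (ε = 1, eq. (3.4))
wave solutions of the osmosis K(2,2) equation for `c < 0`, `g > 0`:
a solution of the orbit equation through `a ∈ (φ₀^-, c/2)` satisfies
`β₁(φ(ξ)) = β₁(a)·exp(εξ/2)`. -/
theorem osmosis_K22_kink_like_c_neg_g_pos
    (c g : ℝ) (hc : c < 0) (hg : 0 < g)
    (ε : ℝ) (hε : ε = -1 ∨ ε = 1)
    (s φ0m l1 l2 l3 a1 b1 α1 : ℝ)
    (hs : s = Real.sqrt (c ^ 2 + 4 * g))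
    (hφ0m : φ0m = (c - s) / 2)
    (hl1 : l1 = -(c + 3 * s) / 3)
    (hl2 : l2 = (c ^ 2 + 6 * g - c * s) / 6)
    (hl3 : l3 = (2 / 3) * (c ^ 2 + 6 * g - c * s))
    (ha1 : a1 = c ^ 2 + 4 * g - c * s)
    (hb1 : b1 = (2 * c - 6 * s) / 3)
    (hα1 : α1 = (c - s) / (2 * Real.sqrt a1))
    (β₁ : ℝ → ℝ)
    (hβ₁ : ∀ x : ℝ, β₁ x =
      (2 * Real.sqrt (x ^ 2 + l1 * x + l2) + 2 * x + l1) * (x - φ0m) ^ α1 /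
        (2 * Real.sqrt a1 * Real.sqrt (x ^ 2 + l1 * x + l2) + b1 * x + l3) ^ α1)
    (a : ℝ) (ha : φ0m < a ∧ a < c / 2)
    (I : Set ℝ) (hI : IsOpen I) (hIconv : Convex ℝ I) (h0I : (0:ℝ) ∈ I)
    (φ : ℝ → ℝ) (hφ0 : φ 0 = a)
    (hrange : ∀ ξ ∈ I, φ0m < φ ξ ∧ φ ξ < c / 2)
    (hq : ∀ ξ ∈ I, 0 < (φ ξ) ^ 2 + l1 * φ ξ + l2)
    (hnum : ∀ ξ ∈ I, 0 < 2 * Real.sqrt ((φ ξ) ^ 2 + l1 * φ ξ + l2) + 2 * φ ξ + l1)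
    (hden : ∀ ξ ∈ I,
      0 < 2 * Real.sqrt a1 * Real.sqrt ((φ ξ) ^ 2 + l1 * φ ξ + l2) + b1 * φ ξ + l3)
    (horb : ∀ ξ ∈ I, HasDerivAt φ
      (ε * (φ ξ - φ0m) * Real.sqrt ((φ ξ) ^ 2 + l1 * φ ξ + l2) / (2 * φ ξ)) ξ) :
    ∀ ξ ∈ I, β₁ (φ ξ) = β₁ a * Real.exp (ε * ξ / 2) :=
  osmosis_K22_kink_like_c_neg_g_pos_general c g hc hg ε s φ0m l1 l2 l3 a1 b1 α1 hs hφ0m hl1 hl2 hl3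
    ha1 hb1 hα1 β₁ hβ₁ a I hI hIconv h0I φ hφ0 hrange hq hnum hden horb
end
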